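/- There is a universal constant C > 0 with the following property. Let d be an even positive integer, let δ ≤ d/4, let a and L be positive integers with d = aL and 1 ≤ a < δ, let m_1,…,m_{2δ−1} be the two-shot masks, and let 0 < p ≤ q. Suppose A : ℝ^{(2δ−1)×L} → ℂ^d satisfies d₁(A(y), A(y′)) ≤ C_A‖y − y′‖₂ for all y, y′ and A(Y(x)) ∼ x for every x ∈ C_{p,q}. Then C_A ≥ C·q·d·√a / (p·δ). -/

import Mathlib

open scoped BigOperators

noncomputable section

/-- Map an integer to `Fin d` by reduction mod `d` (requires `0 < d`). -/
def intToFin (d : ℕ) (hd : 0 < d) (z : ℤ) : Fin d :=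
  ⟨(z % (d : ℤ)).toNat, by
    have h1 : 0 ≤ z % (d : ℤ) := Int.emod_nonneg z (by exact_mod_cast hd.ne')
    have h2 : z % (d : ℤ) < (d : ℤ) := Int.emod_lt_of_pos z (by exact_mod_cast hd)
    omega⟩

/-- Circular shift: `(S_ℓ x)(n) = x(((n + ℓ - 1) mod d) + 1)` in 1-based indexing. -/
def shift {d : ℕ} (ℓ : ℤ) (x : Fin d → ℂ) : Fin d → ℂ :=
  fun i => x (intToFin d i.pos ((i : ℤ) + ℓ))

/-- `⟨u,v⟩ = ∑ u(n) conj(v(n))`. -/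
def innerC {d : ℕ} (u v : Fin d → ℂ) : ℂ := ∑ n, u n * (starRingEnd ℂ) (v n)

/-- `x ∼ x'` iff `x = e^{iθ} x'` for some real `θ`. -/
def phaseEquiv {d : ℕ} (x x' : Fin d → ℂ) : Prop :=
  ∃ θ : ℝ, x = fun n => Complex.exp (θ * Complex.I) * x' n

/-- Euclidean norm on `ℂ^d`. -/
def norm2 {d : ℕ} (x : Fin d → ℂ) : ℝ := Real.sqrt (∑ n, ‖x n‖ ^ 2)

/-- `D₂(x,x') = min_θ ‖x - e^{iθ} x'‖₂`. -/
def D2 {d : ℕ} (x x' : Fin d → ℂ) : ℝ :=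
  ⨅ θ : ℝ, norm2 (fun n => x n - Complex.exp (θ * Complex.I) * x' n)

/-- `C_{p,q} = {x : p ≤ |x(n)| ≤ q for all n}`. -/
def Cpq (d : ℕ) (p q : ℝ) : Set (Fin d → ℂ) :=
  {x | ∀ n, p ≤ ‖x n‖ ∧ ‖x n‖ ≤ q}

/-- `‖m‖_∞ = max_k ‖m_k‖_∞`. -/
def maskSup {d K : ℕ} (m : Fin K → Fin d → ℂ) : ℝ :=
  ⨆ k, ⨆ n, ‖m k n‖

/-- The measurement map `Z(x)_{k,ℓ} = |⟨S_{ℓa} m_k, x⟩|`, `1 ≤ k ≤ K`, `1 ≤ ℓ ≤ L`. -/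
def Zmap {d K : ℕ} (L : ℕ) (m : Fin K → Fin d → ℂ) (a : ℕ) (x : Fin d → ℂ) :
    EuclideanSpace ℝ (Fin K × Fin L) :=
  WithLp.toLp 2 fun kl => ‖innerC (shift ((((kl.2 : ℕ) + 1) * a : ℕ) : ℤ) (m kl.1)) x‖

/-- The measurement map `Y(x)_{k,ℓ} = |⟨S_{ℓa} m_k, x⟩|²`. -/
def Ymap {d K : ℕ} (L : ℕ) (m : Fin K → Fin d → ℂ) (a : ℕ) (x : Fin d → ℂ) :
    EuclideanSpace ℝ (Fin K × Fin L) :=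
  WithLp.toLp 2 fun kl => ‖innerC (shift ((((kl.2 : ℕ) + 1) * a : ℕ) : ℤ) (m kl.1)) x‖ ^ 2

/-- The vectors `x^{±}` (sign `ε = ±1`): `q` on positions `1,…,d/2-δ`, `p` on
`d/2-δ+1,…,d/2`, `±q` on `d/2+1,…,d-δ`, and `p` on `d-δ+1,…,d`. -/
def xpm (d δ : ℕ) (p q ε : ℝ) : Fin d → ℂ :=
  fun i => if (i : ℕ) < d / 2 - δ then (q : ℂ)
    else if (i : ℕ) < d / 2 then (p : ℂ)
    else if (i : ℕ) < d - δ then ((ε * q : ℝ) : ℂ)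
    else (p : ℂ)

/-- The difference of outer products `x x^* - x' x'^*`. -/
def outerDiff {d : ℕ} (x x' : Fin d → ℂ) : Matrix (Fin d) (Fin d) ℂ :=
  Matrix.of fun i j => x i * star (x j) - x' i * star (x' j)

lemma outerDiff_isHermitian {d : ℕ} (x x' : Fin d → ℂ) :
    (outerDiff x x').IsHermitian := by
  unfold Matrix.IsHermitian
  ext i j
  simp [outerDiff, Matrix.conjTranspose_apply, star_sub, star_mul, star_star, mul_comm]

/-- `d₁(x,x') = ‖x x^* - x' x'^*‖₁`, the sum of the singular values (for a Hermitian
matrix, the sum of the absolute values of its eigenvalues). -/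
def d1 {d : ℕ} (x x' : Fin d → ℂ) : ℝ :=
  ∑ i, |(outerDiff_isHermitian x x').eigenvalues i|

/-- The two-shot masks: `m_1 = e_1`, `m_{2j} = e_1 + e_{j+1}`, `m_{2j+1} = e_1 + i e_{j+1}`
for `1 ≤ j ≤ δ - 1` (the index `k : Fin (2δ-1)` stands for the mask `m_{k+1}`). -/
def twoShotMask (d δ : ℕ) : Fin (2 * δ - 1) → Fin d → ℂ :=
  fun k n =>
    if (k : ℕ) = 0 then (if (n : ℕ) = 0 then 1 else 0)
    else if (k : ℕ) % 2 = 1 then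
      (if (n : ℕ) = 0 then 1 else if (n : ℕ) = ((k : ℕ) + 1) / 2 then 1 else 0)
    else (if (n : ℕ) = 0 then 1 else if (n : ℕ) = (k : ℕ) / 2 then Complex.I else 0)


/-!
Test the recovery map on the real vectors `x± = b ± v` of `C_{p,q}` (`xpm`, with `b = xpmBase` and
`v = xpmBump`): `v` is `q` on the block `B = [d/2, d - δ)` and `0` elsewhere, while `b` vanishes
on `B`, is `p` on the two guard blocks `[d/2 - δ, d/2)` and `[d - δ, d)` and `q` elsewhere.

Since `b * v = 0`, the masks `e₁` and `e₁ + i e_{j+1}` only see `|x±|²` and give the same values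
on `x₊` and `x₋`. A mask `e₁ + e_{j+1}` (`j < δ`) gives different values only when its two taps
straddle an endpoint of `B`; one tap then reads `p` (a guard block) and the other `±q`, so the
values differ by `4pq`. Among the `L` shifts by multiples of `a`, only `O(δ/a)` put the first tap
into one of the two windows of width `δ` where this can happen (`boundaryWindow`), so
`‖Y(x₊) - Y(x₋)‖ = O(pqδ/√a)`.

On the other hand `x₊x₊* - x₋x₋* = 2(bvᵀ + vbᵀ)` has Frobenius norm `√8 ‖b‖‖v‖ ≥ q²d/2`, and the
trace norm dominates the Frobenius norm. As `d₁` is invariant under phases and `A(Y(x±)) ∼ x±`,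
the Lipschitz bound yields `q²d/2 ≤ C_A ‖Y(x₊) - Y(x₋)‖`.
-/

section TraceNorm

open Matrix

variable {𝕜 n : Type*} [RCLike 𝕜] [Fintype n] [DecidableEq n]

lemma Matrix.IsHermitian.sum_sq_eigenvalues {M : Matrix n n 𝕜} (hM : M.IsHermitian) :
    ∑ i, hM.eigenvalues i ^ 2 = ∑ i, ∑ j, ‖M i j‖ ^ 2 := by
  have hspec : (M * M).trace = ∑ i, ((hM.eigenvalues i ^ 2 : ℝ) : 𝕜) := by
    set U : Matrix n n 𝕜 := (hM.eigenvectorUnitary : Matrix n n 𝕜)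
    set D : Matrix n n 𝕜 := diagonal (RCLike.ofReal ∘ hM.eigenvalues)
    have hUU : star U * U = 1 := Unitary.coe_star_mul_self _
    calc (M * M).trace = (U * (D * (star U * U) * D) * star U).trace := by
          rw [hM.spectral_theorem, Unitary.conjStarAlgAut_apply]; simp only [mul_assoc]; rfl
      _ = (D * D).trace := by rw [trace_mul_cycle, ← mul_assoc, hUU, mul_one, one_mul]
      _ = _ := by simp [D, diagonal_mul_diagonal, sq]
  have hentries : (M * M).trace = ∑ i, ∑ j, ((‖M i j‖ ^ 2 : ℝ) : 𝕜) := by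
    refine Finset.sum_congr rfl fun i _ => Finset.sum_congr rfl fun j _ => ?_
    rw [RCLike.ofReal_pow, ← RCLike.mul_conj]
    exact congrArg (M i j * ·) (hM.apply j i).symm
  exact_mod_cast hspec.symm.trans hentries

lemma Matrix.IsHermitian.sqrt_sum_norm_sq_le_sum_abs_eigenvalues {M : Matrix n n 𝕜}
    (hM : M.IsHermitian) :
    √(∑ i, ∑ j, ‖M i j‖ ^ 2) ≤ ∑ i, |hM.eigenvalues i| := by
  rw [← hM.sum_sq_eigenvalues, Real.sqrt_le_left (Finset.sum_nonneg fun i _ => abs_nonneg _)]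
  simpa only [sq_abs] using
    Finset.sum_sq_le_sq_sum_of_nonneg (fun i _ => abs_nonneg (hM.eigenvalues i))

end TraceNorm

lemma outerDiff_eq_of_phaseEquiv {d : ℕ} {z z' x x' : Fin d → ℂ} (h : phaseEquiv z x)
    (h' : phaseEquiv z' x') : outerDiff z z' = outerDiff x x' := by
  obtain ⟨θ, rfl⟩ := h
  obtain ⟨φ, rfl⟩ := h'
  have hunit : ∀ ψ : ℝ, Complex.exp (ψ * Complex.I) * star (Complex.exp (ψ * Complex.I)) = 1 := by
    intro ψ
    rw [Complex.star_def, Complex.mul_conj, Complex.normSq_eq_norm_sq,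
      Complex.norm_exp_ofReal_mul_I, one_pow, Complex.ofReal_one]
  ext i j
  simp only [outerDiff, Matrix.of_apply, star_mul]
  linear_combination (x i * star (x j)) * hunit θ - (x' i * star (x' j)) * hunit φ

lemma d1_eq_of_phaseEquiv {d : ℕ} {z z' x x' : Fin d → ℂ} (h : phaseEquiv z x)
    (h' : phaseEquiv z' x') : d1 z z' = d1 x x' := by
  unfold d1
  rw [(Matrix.IsHermitian.eigenvalues_eq_eigenvalues_iff _ _).2
    (by rw [outerDiff_eq_of_phaseEquiv h h'])]

lemma sqrt_sum_norm_sq_outerDiff_le_d1 {d : ℕ} (x x' : Fin d → ℂ) :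
    √(∑ i, ∑ j, ‖outerDiff x x' i j‖ ^ 2) ≤ d1 x x' :=
  (outerDiff_isHermitian x x').sqrt_sum_norm_sq_le_sum_abs_eigenvalues

section Rotation

variable {d : ℕ}

lemma coe_intToFin (hd : 0 < d) (z : ℤ) : ((intToFin d hd z : ℕ) : ℤ) = z % d :=
  Int.toNat_of_nonneg (Int.emod_nonneg z (by exact_mod_cast hd.ne'))

lemma intToFin_coe (hd : 0 < d) (i : Fin d) : intToFin d hd i = i :=
  Fin.ext <| by exact_mod_cast (coe_intToFin hd i).trans (Int.emod_eq_of_lt (by positivity)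
    (by exact_mod_cast i.2))

lemma intToFin_coe_add (hd : 0 < d) (z w : ℤ) :
    intToFin d hd ((intToFin d hd z : ℤ) + w) = intToFin d hd (z + w) :=
  Fin.ext <| Int.ofNat_inj.mp <| by
    rw [coe_intToFin, coe_intToFin, coe_intToFin, Int.emod_add_emod]

lemma val_intToFin_add_neg_eq_or (hd : 0 < d) {j s : ℕ} (hj : j < d) (hsd : s ≤ d) :
    (intToFin d hd (j + -s) : ℕ) = d - s + j ∨ (intToFin d hd (j + -s) : ℕ) + d = d - s + j := by
  have h := coe_intToFin hd (j + -s)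
  rcases le_or_gt s j with hsj | hsj
  · rw [Int.emod_eq_of_lt (by omega) (by omega)] at h
    omega
  · rw [← Int.add_emod_right, Int.emod_eq_of_lt (by omega) (by omega)] at h
    omega

def shiftEquiv (hd : 0 < d) (s : ℤ) : Fin d ≃ Fin d where
  toFun i := intToFin d hd (i + s)
  invFun i := intToFin d hd (i - s)
  left_inv i := by simp only [intToFin_coe_add, sub_eq_add_neg, add_neg_cancel_right, intToFin_coe]
  right_inv i := by simp only [intToFin_coe_add, sub_add_cancel, intToFin_coe]

lemma innerC_shift (s : ℤ) (u x : Fin d → ℂ) :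
    innerC (shift s u) x = innerC u (shift (-s) x) := by
  rcases Nat.eq_zero_or_pos d with rfl | hd
  · simp [innerC]
  refine Fintype.sum_equiv (shiftEquiv hd s) _ _ fun i => ?_
  simp only [shift, shiftEquiv, Equiv.coe_fn_mk, intToFin_coe_add, add_neg_cancel_right,
    intToFin_coe]

end Rotation

section Masks

variable {d : ℕ}

lemma innerC_add_left (u v x : Fin d → ℂ) : innerC (u + v) x = innerC u x + innerC v x := by
  simp only [innerC, Pi.add_apply, add_mul, Finset.sum_add_distrib]

lemma innerC_single_left (i : Fin d) (c : ℂ) (x : Fin d → ℂ) :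
    innerC (Pi.single i c) x = c * (starRingEnd ℂ) (x i) := by
  simp [innerC, Pi.single_apply]

variable {δ : ℕ} {k : Fin (2 * δ - 1)} {z j : Fin d}

lemma twoShotMask_of_eq_zero (hk : (k : ℕ) = 0) (hz : (z : ℕ) = 0) :
    twoShotMask d δ k = Pi.single z 1 := by
  ext n
  simp only [twoShotMask, hk, Pi.single_apply, Fin.ext_iff, hz, if_true]

lemma twoShotMask_of_odd (hk : (k : ℕ) % 2 = 1) (hz : (z : ℕ) = 0) (hj : (j : ℕ) = (k + 1) / 2) :
    twoShotMask d δ k = Pi.single z 1 + Pi.single j 1 := by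
  ext n
  simp only [twoShotMask, Pi.add_apply, Pi.single_apply, Fin.ext_iff, hz, hj, hk]
  split_ifs <;> first | omega | simp

lemma twoShotMask_of_even (hk0 : (k : ℕ) ≠ 0) (hk : (k : ℕ) % 2 = 0) (hz : (z : ℕ) = 0)
    (hj : (j : ℕ) = k / 2) :
    twoShotMask d δ k = Pi.single z 1 + Pi.single j Complex.I := by
  ext n
  simp only [twoShotMask, Pi.add_apply, Pi.single_apply, Fin.ext_iff, hz, hj, hk]
  split_ifs <;> first | contradiction | omega | simp

end Masks

section Measurements

variable {d δ : ℕ} {k : Fin (2 * δ - 1)} {z j : Fin d}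

lemma Ymap_apply {K L : ℕ} (m : Fin K → Fin d → ℂ) (a : ℕ) (x : Fin d → ℂ) (k : Fin K)
    (ℓ : Fin L) :
    Ymap L m a x (k, ℓ) = ‖innerC (m k) (shift (-((((ℓ : ℕ) + 1) * a : ℕ) : ℤ)) x)‖ ^ 2 := by
  simp only [Ymap, PiLp.toLp_apply, innerC_shift]

lemma norm_innerC_twoShotMask_of_eq_zero (hk : (k : ℕ) = 0) (hz : (z : ℕ) = 0) (r : Fin d → ℝ) :
    ‖innerC (twoShotMask d δ k) (fun i => (r i : ℂ))‖ = |r z| := by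
  simp [twoShotMask_of_eq_zero hk hz, innerC_single_left]

lemma norm_sq_innerC_twoShotMask_of_odd (hk : (k : ℕ) % 2 = 1) (hz : (z : ℕ) = 0)
    (hj : (j : ℕ) = (k + 1) / 2) (r : Fin d → ℝ) :
    ‖innerC (twoShotMask d δ k) (fun i => (r i : ℂ))‖ ^ 2 = (r z + r j) ^ 2 := by
  simp [twoShotMask_of_odd hk hz hj, innerC_add_left, innerC_single_left, ← Complex.ofReal_add,
    sq_abs]

lemma norm_sq_innerC_twoShotMask_of_even (hk0 : (k : ℕ) ≠ 0) (hk : (k : ℕ) % 2 = 0)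
    (hz : (z : ℕ) = 0) (hj : (j : ℕ) = k / 2) (r : Fin d → ℝ) :
    ‖innerC (twoShotMask d δ k) (fun i => (r i : ℂ))‖ ^ 2 = r z ^ 2 + r j ^ 2 := by
  simp only [twoShotMask_of_even hk0 hk hz hj, innerC_add_left, innerC_single_left, one_mul,
    Complex.conj_ofReal]
  rw [Complex.sq_norm, mul_comm, Complex.normSq_add_mul_I]

lemma norm_innerC_twoShotMask_of_even_eq (hk : Even (k : ℕ)) (hδd : δ ≤ d) {r r' : Fin d → ℝ}
    (h : ∀ i, r i ^ 2 = r' i ^ 2) :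
    ‖innerC (twoShotMask d δ k) (fun i => (r i : ℂ))‖
      = ‖innerC (twoShotMask d δ k) (fun i => (r' i : ℂ))‖ := by
  have hkδ := k.2
  have hz : ((⟨0, by omega⟩ : Fin d) : ℕ) = 0 := rfl
  rcases eq_or_ne (k : ℕ) 0 with hk0 | hk0
  · rw [norm_innerC_twoShotMask_of_eq_zero hk0 hz, norm_innerC_twoShotMask_of_eq_zero hk0 hz,
      ← sq_eq_sq_iff_abs_eq_abs, h]
  · have hj : ((⟨k / 2, by omega⟩ : Fin d) : ℕ) = k / 2 := rfl
    rw [← sq_eq_sq₀ (norm_nonneg _) (norm_nonneg _),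
      norm_sq_innerC_twoShotMask_of_even hk0 (Nat.even_iff.1 hk) hz hj,
      norm_sq_innerC_twoShotMask_of_even hk0 (Nat.even_iff.1 hk) hz hj, h, h]

end Measurements

section TestVectors

def xpmBase (d δ : ℕ) (p q : ℝ) (n : ℕ) : ℝ :=
  if n < d / 2 - δ then q else if n < d / 2 then p else if n < d - δ then 0 else p

def xpmBump (d δ : ℕ) (q : ℝ) (n : ℕ) : ℝ :=
  if d / 2 ≤ n ∧ n < d - δ then q else 0

variable {d δ : ℕ} {p q : ℝ}

lemma xpm_eq (ε : ℝ) :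
    xpm d δ p q ε = fun i : Fin d => ((xpmBase d δ p q i + ε * xpmBump d δ q i : ℝ) : ℂ) := by
  ext i
  simp only [xpm, xpmBase, xpmBump]
  split_ifs <;> first | omega | simp

lemma xpmBase_mul_xpmBump (n : ℕ) : xpmBase d δ p q n * xpmBump d δ q n = 0 := by
  simp only [xpmBase, xpmBump]
  split_ifs <;> first | omega | simp

lemma xpm_mem_Cpq {ε : ℝ} (hp : 0 < p) (hpq : p ≤ q) (hε : ε = 1 ∨ ε = -1) :
    xpm d δ p q ε ∈ Cpq d p q := by
  intro n
  rw [xpm_eq, Complex.norm_real, Real.norm_eq_abs]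
  simp only [xpmBase, xpmBump]
  rcases hε with rfl | rfl <;> split_ifs <;> first | omega |
    simp [abs_of_pos hp, abs_of_pos (hp.trans_le hpq), hpq]

def boundaryWindow (d δ : ℕ) : Finset ℕ :=
  Finset.Ico (d / 2 - δ) (d / 2) ∪ Finset.Ico (d - 2 * δ) (d - δ)

lemma abs_xpmBase_add_mul_xpmBump_add_le {μ ν j : ℕ} (hp : 0 ≤ p) (hq : 0 ≤ q)
    (hδd : 4 * δ ≤ d) (hμ : μ < d) (hjδ : j < δ) (hν : ν = μ + j ∨ ν + d = μ + j) :
    |(xpmBase d δ p q μ + xpmBase d δ p q ν) * (xpmBump d δ q μ + xpmBump d δ q ν)|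
      ≤ if μ ∈ boundaryWindow d δ then p * q else 0 := by
  simp only [xpmBase, xpmBump, boundaryWindow, Finset.mem_union, Finset.mem_Ico]
  split_ifs <;> first | omega | simp [abs_of_nonneg, hp, hq, mul_nonneg, mul_comm]

lemma abs_xpm_taps_le (hd : 0 < d) {s j : ℕ} (hp : 0 ≤ p) (hq : 0 ≤ q) (hδd : 4 * δ ≤ d)
    (hs : 0 < s) (hsd : s ≤ d) (hjδ : j < δ) :
    |(xpmBase d δ p q (intToFin d hd ((0 : ℕ) + -s))
        + xpmBase d δ p q (intToFin d hd (j + -s)))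
      * (xpmBump d δ q (intToFin d hd ((0 : ℕ) + -s))
        + xpmBump d δ q (intToFin d hd (j + -s)))|
      ≤ if d - s ∈ boundaryWindow d δ then p * q else 0 := by
  have hμ : (intToFin d hd ((0 : ℕ) + -s) : ℕ) = d - s := by
    have := val_intToFin_add_neg_eq_or hd (j := 0) hd hsd
    omega
  have hν := val_intToFin_add_neg_eq_or hd (j := j) (by omega) hsd
  rw [hμ]
  exact abs_xpmBase_add_mul_xpmBump_add_le hp hq hδd (by omega) hjδ (by omega)

end TestVectors

lemma abs_Ymap_xpm_sub_le {d δ a L : ℕ} {p q : ℝ} (hδd : 4 * δ ≤ d) (ha : 0 < a)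
    (hdal : d = a * L) (hp : 0 ≤ p) (hq : 0 ≤ q) (k : Fin (2 * δ - 1)) (ℓ : Fin L) :
    |Ymap L (twoShotMask d δ) a (xpm d δ p q 1) (k, ℓ)
        - Ymap L (twoShotMask d δ) a (xpm d δ p q (-1)) (k, ℓ)|
      ≤ if d - ((ℓ : ℕ) + 1) * a ∈ boundaryWindow d δ then 4 * p * q else 0 := by
  have hk := k.2
  have hd : 0 < d := by omega
  set s := ((ℓ : ℕ) + 1) * a
  have hs : 0 < s ∧ s ≤ d :=
    ⟨by positivity, hdal ▸ Nat.mul_comm a L ▸ Nat.mul_le_mul_right a ℓ.2⟩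
  -- the shifted mask reads the coordinate `pos i` of `x` through its tap `i`
  set pos : Fin d → Fin d := fun i => intToFin d hd (i + -s)
  set r : ℝ → Fin d → ℝ := fun ε i => xpmBase d δ p q (pos i) + ε * xpmBump d δ q (pos i)
  have hY : ∀ ε, Ymap L (twoShotMask d δ) a (xpm d δ p q ε) (k, ℓ)
      = ‖innerC (twoShotMask d δ k) (fun i => (r ε i : ℂ))‖ ^ 2 := fun ε => by
    rw [Ymap_apply, xpm_eq]
    rfl
  rcases Nat.even_or_odd k with hk2 | hk2
  · have hsq : ∀ i, r 1 i ^ 2 = r (-1) i ^ 2 := fun i => by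
      linear_combination 4 * xpmBase_mul_xpmBump (d := d) (δ := δ) (p := p) (q := q) (pos i)
    rw [hY, hY, norm_innerC_twoShotMask_of_even_eq hk2 (by omega) hsq, sub_self, abs_zero]
    positivity
  set z : Fin d := ⟨0, hd⟩
  set j : Fin d := ⟨(k + 1) / 2, by omega⟩
  have hk1 := Nat.odd_iff.1 hk2
  rw [hY, hY, norm_sq_innerC_twoShotMask_of_odd hk1 (z := z) rfl (j := j) rfl,
    norm_sq_innerC_twoShotMask_of_odd hk1 (z := z) rfl (j := j) rfl]
  calc |(r 1 z + r 1 j) ^ 2 - (r (-1) z + r (-1) j) ^ 2|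
      = |4 * ((xpmBase d δ p q (pos z) + xpmBase d δ p q (pos j))
          * (xpmBump d δ q (pos z) + xpmBump d δ q (pos j)))| := by
        simp only [r]
        ring_nf
    _ ≤ 4 * if d - s ∈ boundaryWindow d δ then p * q else 0 := by
        rw [abs_mul, abs_of_pos four_pos]
        exact mul_le_mul_of_nonneg_left (abs_xpm_taps_le hd hp hq hδd hs.1 hs.2
          (j := (k + 1) / 2) (by omega)) zero_le_four
    _ = _ := by split_ifs <;> ring

lemma card_le_of_mul_mem_Ico {a c r : ℕ} (ha : 0 < a) {s : Finset ℕ}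
    (hs : ∀ m ∈ s, m * a ∈ Finset.Ico c r) : s.card ≤ (r - c) / a + 1 := by
  rcases s.eq_empty_or_nonempty with rfl | hne
  · simp
  set m₀ := s.min' hne
  have hsub : s ⊆ Finset.Icc m₀ (m₀ + (r - c) / a) := fun m hm => by
    have hm₀ := Finset.mem_Ico.1 (hs m₀ (s.min'_mem hne))
    have hm' := Finset.mem_Ico.1 (hs m hm)
    have hle : m₀ ≤ m := s.min'_le m hm
    refine Finset.mem_Icc.2 ⟨hle, ?_⟩
    have : (m - m₀) * a ≤ r - c := by rw [Nat.sub_mul]; omega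
    have := (Nat.le_div_iff_mul_le ha).2 this
    omega
  simpa only [Nat.card_Icc, add_assoc, Nat.add_sub_cancel_left] using Finset.card_le_card hsub

lemma card_filter_sub_mul_mem_Ico_le {d a L c r : ℕ} (ha : 0 < a) (hdal : d = a * L) :
    (Finset.univ.filter fun ℓ : Fin L => d - ((ℓ : ℕ) + 1) * a ∈ Finset.Ico c r).card
      ≤ (r - c) / a + 1 := by
  set S := Finset.univ.filter fun ℓ : Fin L => d - ((ℓ : ℕ) + 1) * a ∈ Finset.Ico c r
  have hinj : Set.InjOn (fun ℓ : Fin L => L - ((ℓ : ℕ) + 1)) S := fun ℓ _ ℓ' _ h => by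
    have := ℓ.2; have := ℓ'.2
    exact Fin.ext (by simp only at h; omega)
  rw [← Finset.card_image_of_injOn hinj]
  refine card_le_of_mul_mem_Ico ha fun m hm => ?_
  obtain ⟨ℓ, hℓ, rfl⟩ := Finset.mem_image.1 hm
  rw [Nat.sub_mul, Nat.mul_comm L a, ← hdal]
  exact (Finset.mem_filter.1 hℓ).2

lemma card_filter_mem_boundaryWindow_le {d δ a L : ℕ} (ha : 0 < a) (hdal : d = a * L)
    (hδd : 4 * δ ≤ d) :
    (Finset.univ.filter fun ℓ : Fin L => d - ((ℓ : ℕ) + 1) * a ∈ boundaryWindow d δ).card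
      ≤ 2 * (δ / a + 1) := by
  simp only [boundaryWindow, Finset.mem_union, Finset.filter_or]
  refine (Finset.card_union_le _ _).trans ?_
  have h₁ := card_filter_sub_mul_mem_Ico_le (L := L) (c := d / 2 - δ) (r := d / 2) ha hdal
  have h₂ := card_filter_sub_mul_mem_Ico_le (L := L) (c := d - 2 * δ) (r := d - δ) ha hdal
  rw [show d / 2 - (d / 2 - δ) = δ by omega] at h₁
  rw [show d - δ - (d - 2 * δ) = δ by omega] at h₂
  omega

lemma EuclideanSpace.norm_sq_le_of_abs_le_ite {ι κ : Type*} [Fintype ι] [Fintype κ]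
    [DecidableEq κ] (y : EuclideanSpace ℝ (ι × κ)) (S : Finset κ) (c : ℝ)
    (h : ∀ i l, |y (i, l)| ≤ if l ∈ S then c else 0) :
    ‖y‖ ^ 2 ≤ Fintype.card ι * S.card * c ^ 2 := by
  have hentry : ∀ x : ι × κ, ‖y x‖ ^ 2 ≤ if x.2 ∈ S then c ^ 2 else 0 := fun x => by
    have hx := h x.1 x.2
    rw [Real.norm_eq_abs]
    split_ifs at hx ⊢
    · exact pow_le_pow_left₀ (abs_nonneg _) hx 2
    · simp [le_antisymm hx (abs_nonneg _)]
  calc ‖y‖ ^ 2 ≤ ∑ x : ι × κ, if x.2 ∈ S then c ^ 2 else 0 := by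
        rw [EuclideanSpace.norm_sq_eq]
        exact Finset.sum_le_sum fun x _ => hentry x
    _ = Fintype.card ι * S.card * c ^ 2 := by
        simp [Fintype.sum_prod_type, Finset.sum_ite_mem, mul_assoc]

lemma sqrt_mul_norm_Ymap_xpm_sub_le {d δ a L : ℕ} {p q : ℝ} (hδd : 4 * δ ≤ d) (ha : 0 < a)
    (haδ : a < δ) (hdal : d = a * L) (hp : 0 ≤ p) (hq : 0 ≤ q) :
    √a * ‖Ymap L (twoShotMask d δ) a (xpm d δ p q 1)
        - Ymap L (twoShotMask d δ) a (xpm d δ p q (-1))‖ ≤ 12 * p * q * δ := by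
  set y :=
    Ymap L (twoShotMask d δ) a (xpm d δ p q 1) - Ymap L (twoShotMask d δ) a (xpm d δ p q (-1))
  set S := Finset.univ.filter fun ℓ : Fin L => d - ((ℓ : ℕ) + 1) * a ∈ boundaryWindow d δ
  have hy := EuclideanSpace.norm_sq_le_of_abs_le_ite y S (4 * p * q) fun k ℓ => by
    simpa [y, S] using abs_Ymap_xpm_sub_le hδd ha hdal hp hq k ℓ
  have hcardK : (Fintype.card (Fin (2 * δ - 1)) : ℝ) ≤ 2 * δ := by
    rw [Fintype.card_fin]; exact_mod_cast Nat.sub_le _ _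
  have hcardS : (S.card : ℝ) * a ≤ 4 * δ := by
    have hS : (S.card : ℝ) ≤ 2 * ((δ / a : ℕ) + 1) := by
      exact_mod_cast card_filter_mem_boundaryWindow_le ha hdal hδd
    have hdiv : ((δ / a : ℕ) : ℝ) * a ≤ δ := by exact_mod_cast Nat.div_mul_le_self δ a
    have haδ' : (a : ℝ) ≤ δ := by exact_mod_cast haδ.le
    nlinarith
  rw [← pow_le_pow_iff_left₀ (by positivity) (by positivity) two_ne_zero, mul_pow,
    Real.sq_sqrt (by positivity)]
  calc (a : ℝ) * ‖y‖ ^ 2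
      ≤ a * (Fintype.card (Fin (2 * δ - 1)) * S.card * (4 * p * q) ^ 2) := by gcongr
    _ ≤ (2 * δ) * (4 * δ) * (4 * p * q) ^ 2 := by
        rw [show (a : ℝ) * (Fintype.card (Fin (2 * δ - 1)) * S.card * (4 * p * q) ^ 2)
          = Fintype.card (Fin (2 * δ - 1)) * (S.card * a) * (4 * p * q) ^ 2 by ring]
        gcongr
    _ ≤ (12 * p * q * δ) ^ 2 := by nlinarith [sq_nonneg (p * q * δ)]

lemma sum_norm_sq_outerDiff_add_sub {d : ℕ} (b v : Fin d → ℝ) (hbv : ∀ i, b i * v i = 0) :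
    ∑ i, ∑ j, ‖outerDiff (fun i => ((b i + v i : ℝ) : ℂ)) (fun i => ((b i - v i : ℝ) : ℂ)) i j‖ ^ 2
      = 8 * (∑ i, b i ^ 2) * ∑ i, v i ^ 2 := by
  have hentry : ∀ i j,
      ‖outerDiff (fun i => ((b i + v i : ℝ) : ℂ)) (fun i => ((b i - v i : ℝ) : ℂ)) i j‖ ^ 2
        = 4 * (b i ^ 2 * v j ^ 2 + v i ^ 2 * b j ^ 2) := fun i j => by
    simp only [outerDiff, Matrix.of_apply, Complex.star_def, Complex.conj_ofReal,
      ← Complex.ofReal_mul, ← Complex.ofReal_sub, Complex.norm_real, Real.norm_eq_abs, sq_abs]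
    linear_combination 8 * (b j * v j) * hbv i
  simp only [hentry, ← Finset.mul_sum, Finset.sum_add_distrib, ← Finset.sum_mul]
  ring

lemma card_mul_sq_le_sum_sq {d c n : ℕ} {f : ℕ → ℝ} {q : ℝ} (hcn : c + n ≤ d)
    (hf : ∀ i ∈ Finset.Ico c (c + n), f i = q) : (n : ℝ) * q ^ 2 ≤ ∑ i : Fin d, f i ^ 2 := by
  rw [Fin.sum_univ_eq_sum_range (fun i => f i ^ 2)]
  calc (n : ℝ) * q ^ 2 = ∑ i ∈ Finset.Ico c (c + n), f i ^ 2 := by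
        rw [Finset.sum_congr rfl fun i hi => by rw [hf i hi], Finset.sum_const, Nat.card_Ico,
          Nat.add_sub_cancel_left, nsmul_eq_mul]
    _ ≤ ∑ i ∈ Finset.range d, f i ^ 2 :=
        Finset.sum_le_sum_of_subset_of_nonneg
          (fun i hi => Finset.mem_range.2 ((Finset.mem_Ico.1 hi).2.trans_le hcn))
          fun _ _ _ => sq_nonneg _

lemma d1_xpm_ge {d δ : ℕ} {p q : ℝ} (heven : Even d) (hδd : 4 * δ ≤ d) :
    q ^ 2 * d / 2 ≤ d1 (xpm d δ p q 1) (xpm d δ p q (-1)) := by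
  set b : Fin d → ℝ := fun i => xpmBase d δ p q i
  set v : Fin d → ℝ := fun i => xpmBump d δ q i
  set N := d / 2 - δ
  have hb : (N : ℝ) * q ^ 2 ≤ ∑ i, b i ^ 2 :=
    card_mul_sq_le_sum_sq (f := xpmBase d δ p q) (c := 0) (by omega) fun i hi => by
      simp only [Finset.mem_Ico] at hi
      simp [xpmBase, show i < d / 2 - δ by omega]
  have hv : (N : ℝ) * q ^ 2 ≤ ∑ i, v i ^ 2 :=
    card_mul_sq_le_sum_sq (f := xpmBump d δ q) (c := d / 2) (by omega) fun i hi => by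
      simp only [Finset.mem_Ico] at hi
      simp [xpmBump, show d / 2 ≤ i ∧ i < d - δ by omega]
  have hdN : (d : ℝ) ≤ 4 * N := by
    obtain ⟨m, rfl⟩ := heven
    exact_mod_cast (by omega : m + m ≤ 4 * N)
  have hfrob : ∑ i, ∑ j, ‖outerDiff (xpm d δ p q 1) (xpm d δ p q (-1)) i j‖ ^ 2
      = 8 * (∑ i, b i ^ 2) * ∑ i, v i ^ 2 := by
    rw [xpm_eq, xpm_eq]
    simpa only [one_mul, neg_one_mul, ← sub_eq_add_neg] using
      sum_norm_sq_outerDiff_add_sub b v fun i => xpmBase_mul_xpmBump (i : ℕ)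
  refine le_trans ?_ (sqrt_sum_norm_sq_outerDiff_le_d1 _ _)
  rw [hfrob, Real.le_sqrt (by positivity) (by positivity)]
  have hprod : (N * q ^ 2) ^ 2 ≤ (∑ i, b i ^ 2) * ∑ i, v i ^ 2 := by
    rw [sq]
    exact mul_le_mul hb hv (by positivity) (by positivity)
  have hdq : q ^ 2 * d / 2 ≤ 2 * (N * q ^ 2) := by nlinarith [sq_nonneg q]
  calc (q ^ 2 * d / 2) ^ 2 ≤ (2 * (N * q ^ 2)) ^ 2 := pow_le_pow_left₀ (by positivity) hdq 2
    _ ≤ 8 * (∑ i, b i ^ 2) * ∑ i, v i ^ 2 := by nlinarith [sq_nonneg ((N : ℝ) * q ^ 2)]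

/-- Lower Lipschitz bound for recovery from the `Y`-measurements
with the two-shot masks. -/
theorem lower_lipschitz_Y_twoShot : ∃ C : ℝ, 0 < C ∧
    ∀ (d δ a L : ℕ) (p q CA : ℝ)
      (A : EuclideanSpace ℝ (Fin (2 * δ - 1) × Fin L) → (Fin d → ℂ)),
      0 < d → Even d → 4 * δ ≤ d → 0 < a → 0 < L → d = a * L → 1 ≤ a → a < δ →
      0 < p → p ≤ q →
      (∀ y y', d1 (A y) (A y') ≤ CA * ‖y - y'‖) →
      (∀ x ∈ Cpq d p q, phaseEquiv (A (Ymap L (twoShotMask d δ) a x)) x) →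
      C * q * (d : ℝ) * Real.sqrt a / (p * (δ : ℝ)) ≤ CA := by
  refine ⟨1 / 24, by norm_num, ?_⟩
  intro d δ a L p q CA A _ heven hδd ha _ hdal _ haδ hp hpq hlip hrec
  have hq : 0 < q := hp.trans_le hpq
  set N :=
    ‖Ymap L (twoShotMask d δ) a (xpm d δ p q 1) - Ymap L (twoShotMask d δ) a (xpm d δ p q (-1))‖
  have hlower : q ^ 2 * d / 2 ≤ CA * N := by
    refine (d1_xpm_ge (p := p) heven hδd).trans (le_of_eq_of_le ?_ (hlip _ _))
    exact (d1_eq_of_phaseEquiv (hrec _ (xpm_mem_Cpq hp hpq (.inl rfl)))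
      (hrec _ (xpm_mem_Cpq hp hpq (.inr rfl)))).symm
  have hupper : √a * N ≤ 12 * p * q * δ := sqrt_mul_norm_Ymap_xpm_sub_le hδd ha haδ hdal hp.le hq.le
  have hCA : 0 < CA :=
    pos_of_mul_pos_left ((by positivity : (0 : ℝ) < q ^ 2 * d / 2).trans_le hlower) (norm_nonneg _)
  have key : q * (q * d * √a) ≤ q * (24 * CA * p * δ) := by
    nlinarith [mul_le_mul_of_nonneg_left hlower (Real.sqrt_nonneg a),
      mul_le_mul_of_nonneg_left hupper hCA.le]
  rw [div_le_iff₀ (mul_pos hp (by exact_mod_cast ha.trans haδ))]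
  nlinarith [le_of_mul_le_mul_left key hq]
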